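/- Let α > 0 be fixed. Then the function x ↦ S(α,x) = ∫₀^∞ ( t^α · (t − α) / (2 · sinh t) ) · (x² + α²)/(x² + t²) dt is strictly increasing on (0, ∞). -/
import Mathlib

open MeasureTheory Filter Real

/-- `S(α,x) = ∫₀^∞ (t^α·(t−α)/(2·sinh t)) · (x²+α²)/(x²+t²) dt`. -/
noncomputable def Sint (α x : ℝ) : ℝ :=
  ∫ t in Set.Ioi (0:ℝ),
    t ^ α * (t - α) / (2 * Real.sinh t) * ((x ^ 2 + α ^ 2) / (x ^ 2 + t ^ 2))

lemma sinh_lb {t : ℝ} (ht : 0 < t) : t * Real.exp t / (2 * (1 + t)) ≤ Real.sinh t := by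
  rw [Real.sinh_eq, div_le_div_iff₀ (by positivity) two_pos]
  have h1 : (1 : ℝ) + t ≤ Real.exp t := by linarith [Real.add_one_le_exp t]
  have hexp := Real.exp_pos t
  have hexpn := Real.exp_pos (-t)
  have hef : Real.exp (-t) * Real.exp t = 1 := by rw [← Real.exp_add]; simp
  nlinarith [mul_le_mul_of_nonneg_left h1 hexpn.le, mul_le_mul_of_nonneg_left h1 hexp.le]

lemma integrable_f (α x : ℝ) (hα : 0 < α) (hx : 0 < x) :
    IntegrableOn (fun t : ℝ =>
      t ^ α * (t - α) / (2 * Real.sinh t) * ((x ^ 2 + α ^ 2) / (x ^ 2 + t ^ 2)))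
      (Set.Ioi 0) := by
  have hmeas : AEStronglyMeasurable (fun t : ℝ =>
      t ^ α * (t - α) / (2 * Real.sinh t) * ((x ^ 2 + α ^ 2) / (x ^ 2 + t ^ 2)))
      (volume.restrict (Set.Ioi 0)) := by
    apply Measurable.aestronglyMeasurable
    fun_prop
  set C : ℝ := (x ^ 2 + α ^ 2) / x ^ 2 with hC
  have hCpos : 0 < C := by positivity
  -- dominating function
  have hgint : IntegrableOn (fun t : ℝ =>
      C * (Real.exp (-t) * (t ^ (α - 1) * (t + α) * (1 + t)))) (Set.Ioi 0) := by
    apply Integrable.const_mul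
    have h1 := Real.GammaIntegral_convergent (by linarith : (0:ℝ) < α + 2)
    have h2 := Real.GammaIntegral_convergent (by linarith : (0:ℝ) < α + 1)
    have h3 := Real.GammaIntegral_convergent hα
    have hsum := ((h1.add (h2.const_mul (1 + α))).add (h3.const_mul α))
    apply IntegrableOn.congr_fun hsum _ measurableSet_Ioi
    intro t ht
    simp only [Set.mem_Ioi] at ht
    have e1 : t ^ (α + 2 - 1) = t ^ (α - 1) * t ^ 2 := by
      rw [← Real.rpow_natCast t 2, ← Real.rpow_add ht]; ring_nf
    have e2 : t ^ (α + 1 - 1) = t ^ (α - 1) * t := by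
      rw [show t ^ (α - 1) * t = t ^ (α - 1) * t ^ (1:ℝ) by rw [Real.rpow_one],
        ← Real.rpow_add ht]; ring_nf
    simp only [Pi.add_apply, e1, e2]
    ring
  apply hgint.mono' hmeas
  filter_upwards [self_mem_ae_restrict measurableSet_Ioi] with t ht
  simp only [Set.mem_Ioi] at ht
  have hs : 0 < Real.sinh t := Real.sinh_pos_iff.2 ht
  have hexp := Real.exp_pos t
  have hta : t ^ α = t ^ (α - 1) * t := by
    rw [show t ^ (α - 1) * t = t ^ (α - 1) * t ^ (1:ℝ) by rw [Real.rpow_one],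
      ← Real.rpow_add ht]; ring_nf
  have hrp : (0:ℝ) ≤ t ^ (α - 1) := Real.rpow_nonneg ht.le _
  rw [Real.norm_eq_abs, abs_mul, abs_div, abs_of_pos (by positivity : (0:ℝ) < 2 * Real.sinh t),
    abs_of_pos (by positivity : (0:ℝ) < (x ^ 2 + α ^ 2) / (x ^ 2 + t ^ 2)), abs_mul,
    abs_of_nonneg (Real.rpow_nonneg ht.le α)]
  have habs : |t - α| ≤ t + α := by
    rw [abs_le]; constructor <;> nlinarith
  calc t ^ α * |t - α| / (2 * Real.sinh t) * ((x ^ 2 + α ^ 2) / (x ^ 2 + t ^ 2))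
      ≤ t ^ α * (t + α) / (2 * (t * Real.exp t / (2 * (1 + t)))) * ((x ^ 2 + α ^ 2) / x ^ 2) := by
        gcongr <;> first
          | exact sinh_lb ht
          | exact habs
          | positivity
          | exact Real.rpow_nonneg ht.le α
          | nlinarith
    _ = C * (Real.exp (-t) * (t ^ (α - 1) * (t + α) * (1 + t))) := by
        rw [hta, Real.exp_neg, hC]
        field_simp

theorem stmt_15 (α : ℝ) (hα : 0 < α) :
    StrictMonoOn (fun x : ℝ => Sint α x) (Set.Ioi 0) := by
  intro x hx y hy hxy
  simp only [Set.mem_Ioi] at hx hy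
  have hIx := integrable_f α x hα hx
  have hIy := integrable_f α y hα hy
  set fx : ℝ → ℝ := fun t =>
    t ^ α * (t - α) / (2 * Real.sinh t) * ((x ^ 2 + α ^ 2) / (x ^ 2 + t ^ 2)) with hfx
  set fy : ℝ → ℝ := fun t =>
    t ^ α * (t - α) / (2 * Real.sinh t) * ((y ^ 2 + α ^ 2) / (y ^ 2 + t ^ 2)) with hfy
  set D : ℝ → ℝ := fun t =>
    (y ^ 2 - x ^ 2) * (t ^ α * (t - α) ^ 2 * (t + α)) /
      (2 * Real.sinh t * ((x ^ 2 + t ^ 2) * (y ^ 2 + t ^ 2))) with hD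
  have key : Set.EqOn (fun t => fy t - fx t) D (Set.Ioi 0) := by
    intro t ht
    simp only [Set.mem_Ioi] at ht
    have hs : Real.sinh t ≠ 0 := ne_of_gt (Real.sinh_pos_iff.2 ht)
    have h1 : x ^ 2 + t ^ 2 ≠ 0 := by positivity
    have h2 : y ^ 2 + t ^ 2 ≠ 0 := by positivity
    simp only [hfx, hfy, hD]
    field_simp
    ring
  have hID : IntegrableOn D (Set.Ioi 0) :=
    IntegrableOn.congr_fun (hIy.sub hIx) key measurableSet_Ioi
  have hDpos : 0 < ∫ t in Set.Ioi (0:ℝ), D t := by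
    rw [setIntegral_pos_iff_support_of_nonneg_ae _ hID]
    · have hsub : Set.Ioi α ⊆ Function.support D ∩ Set.Ioi 0 := by
        intro t ht
        simp only [Set.mem_Ioi] at ht
        have ht0 : 0 < t := hα.trans ht
        refine ⟨fun h0 => ?_, ht0⟩
        have hnum : 0 < (y ^ 2 - x ^ 2) * (t ^ α * (t - α) ^ 2 * (t + α)) := by
          have hyx : 0 < y ^ 2 - x ^ 2 := by nlinarith
          have hsq : 0 < (t - α) ^ 2 := pow_pos (by linarith) 2
          have := Real.rpow_pos_of_pos ht0 α
          positivity
        have hden : 0 < 2 * Real.sinh t * ((x ^ 2 + t ^ 2) * (y ^ 2 + t ^ 2)) := by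
          have := Real.sinh_pos_iff.2 ht0
          positivity
        exact absurd h0 (ne_of_gt (div_pos hnum hden))
      calc (0:ENNReal) < volume (Set.Ioi α) := by rw [Real.volume_Ioi]; exact ENNReal.zero_lt_top
        _ ≤ volume (Function.support D ∩ Set.Ioi 0) := measure_mono hsub
    · filter_upwards [self_mem_ae_restrict measurableSet_Ioi] with t ht
      simp only [Set.mem_Ioi] at ht
      have hs := (Real.sinh_pos_iff.2 ht).le
      have hyx : (0:ℝ) ≤ y ^ 2 - x ^ 2 := by nlinarith
      have := Real.rpow_nonneg ht.le α
      simp only [hD]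
      positivity
  have hcong : ∫ t in Set.Ioi (0:ℝ), (fy t - fx t) = ∫ t in Set.Ioi (0:ℝ), D t :=
    setIntegral_congr_fun measurableSet_Ioi key
  have hsub : ∫ t in Set.Ioi (0:ℝ), (fy t - fx t)
      = (∫ t in Set.Ioi (0:ℝ), fy t) - ∫ t in Set.Ioi (0:ℝ), fx t :=
    integral_sub hIy hIx
  have : Sint α x < Sint α y := by
    have hx' : Sint α x = ∫ t in Set.Ioi (0:ℝ), fx t := rfl
    have hy' : Sint α y = ∫ t in Set.Ioi (0:ℝ), fy t := rfl
    rw [hx', hy']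
    linarith [hcong, hsub, hDpos]
  exact this
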